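/- Writing x(t) = (x₁(t), x₂(t)) with x₁(t) ∈ ℝⁿ the vector of clock phases, the phase is the sum of a linearly growing term and a transient that tends to zero: x₁(t) − ω^avg t 𝟏 → 0 as t → ∞. -/

import Mathlib

/-!
Subtracting the drift `ω^avg t 𝟏` from the phases leaves `y` with `y' = v` and
`v' = -a L v - b L y`, where `y` and `v` stay in the sum-zero subspace: `𝟏ᵀ L = 0`, `x(0) = 0`
and `𝟏ᵀ ω^u = n ω^avg`. Since the graph is connected, `ker Bᵀ` consists of the constants, so on
that subspace `uᵀ L u = |Bᵀ u|² ≥ λ |u|²` for some `λ > 0`. For small `ε > 0` the Lyapunov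
function `|v|²/2 + (b + ε a)/2 yᵀ L y + ε yᵀ v` is comparable to `|v|² + yᵀ L y` and satisfies
`W' ≤ -(ε/2) W`, so it decays exponentially, and `|y|²` with it.
-/

open Matrix Filter Topology

section Norms

variable {ι : Type*} [Fintype ι]

theorem sq_norm_le_dotProduct_self (u : ι → ℝ) : ‖u‖ ^ 2 ≤ u ⬝ᵥ u := by
  have hnorm : ‖u‖ ≤ √(u ⬝ᵥ u) := by
    refine (pi_norm_le_iff_of_nonneg (Real.sqrt_nonneg _)).2 fun i => ?_
    rw [Real.norm_eq_abs]
    refine Real.abs_le_sqrt ?_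
    simpa [dotProduct, sq] using
      Finset.single_le_sum (fun j _ => mul_self_nonneg (u j)) (Finset.mem_univ i)
  calc ‖u‖ ^ 2 ≤ √(u ⬝ᵥ u) ^ 2 := pow_le_pow_left₀ (norm_nonneg u) hnorm 2
    _ = u ⬝ᵥ u := Real.sq_sqrt (by simpa using dotProduct_self_star_nonneg u)

theorem dotProduct_self_le_card_mul_sq_norm (u : ι → ℝ) :
    u ⬝ᵥ u ≤ Fintype.card ι * ‖u‖ ^ 2 := by
  calc u ⬝ᵥ u = ∑ i, ‖u i‖ ^ 2 := by simp [dotProduct, sq]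
    _ ≤ ∑ _i : ι, ‖u‖ ^ 2 := Finset.sum_le_sum fun i _ =>
        pow_le_pow_left₀ (norm_nonneg _) (norm_le_pi_norm u i) 2
    _ = Fintype.card ι * ‖u‖ ^ 2 := by simp

end Norms

theorem exists_pos_mul_dotProduct_self_le {ι κ : Type*} [Fintype ι] [Fintype κ]
    (M : Matrix κ ι ℝ) (S : Submodule ℝ (ι → ℝ)) (hM : ∀ u ∈ S, M *ᵥ u = 0 → u = 0) :
    ∃ c > 0, ∀ u ∈ S, c * (u ⬝ᵥ u) ≤ (M *ᵥ u) ⬝ᵥ (M *ᵥ u) := by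
  obtain ⟨K, -, hK⟩ := (M.mulVecLin.domRestrict S).exists_antilipschitzWith <| by
    rw [LinearMap.ker_eq_bot']
    exact fun u hu => Subtype.ext (hM u u.2 hu)
  refine ⟨1 / (Fintype.card ι * K ^ 2 + 1), by positivity, fun u hu => ?_⟩
  have hbound : ‖u‖ ≤ K * ‖M *ᵥ u‖ := by
    simpa using hK.le_mul_dist ⟨u, hu⟩ 0
  have hu := dotProduct_self_le_card_mul_sq_norm u
  have hMu := sq_norm_le_dotProduct_self (M *ᵥ u)
  have hsq : ‖u‖ ^ 2 ≤ K ^ 2 * ‖M *ᵥ u‖ ^ 2 := by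
    rw [← mul_pow]; exact pow_le_pow_left₀ (norm_nonneg u) hbound 2
  rw [div_mul_eq_mul_div, one_mul, div_le_iff₀ (by positivity)]
  have hMu0 : 0 ≤ (M *ᵥ u) ⬝ᵥ (M *ᵥ u) := (sq_nonneg _).trans hMu
  calc u ⬝ᵥ u ≤ Fintype.card ι * (K ^ 2 * ‖M *ᵥ u‖ ^ 2) := hu.trans (by gcongr)
    _ ≤ Fintype.card ι * (K ^ 2 * ((M *ᵥ u) ⬝ᵥ (M *ᵥ u))) := by gcongr
    _ ≤ _ := by linarith

def sumZero (ι : Type*) [Fintype ι] : Submodule ℝ (ι → ℝ) where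
  carrier := {u | ∑ i, u i = 0}
  add_mem' hu hw := by simp_all [Finset.sum_add_distrib]
  zero_mem' := by simp
  smul_mem' c u hu := by simp_all [← Finset.mul_sum]

@[simp]
theorem mem_sumZero {ι : Type*} [Fintype ι] {u : ι → ℝ} : u ∈ sumZero ι ↔ ∑ i, u i = 0 :=
  Iff.rfl

theorem SimpleGraph.Preconnected.eq_of_forall_adj {V α : Type*} {G : SimpleGraph V}
    (hG : G.Preconnected) {f : V → α} (hf : ∀ i j, G.Adj i j → f i = f j) (i j : V) :
    f i = f j := by
  obtain ⟨w⟩ := hG i j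
  induction w with
  | nil => rfl
  | cons h _ ih => exact (hf _ _ h).trans ih

section Incidence

variable {V E : Type*} [Fintype V] [DecidableEq V] {src tgt : E → V} {B : Matrix V E ℝ}

theorem incidence_transpose_mulVec (hne : ∀ l, src l ≠ tgt l)
    (hB : ∀ i l, B i l = if i = src l then 1 else if i = tgt l then -1 else 0) (u : V → ℝ) :
    Bᵀ *ᵥ u = fun l => u (src l) - u (tgt l) := by
  funext l
  rw [mulVec, dotProduct, Fintype.sum_eq_add (src l) (tgt l) (hne l)]
  · simp [hB, (hne l).symm, sub_eq_add_neg]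
  · intro i ⟨hs, ht⟩
    simp [hB, hs, ht]

theorem eq_zero_of_incidence_transpose_mulVec_eq_zero {G : SimpleGraph V} (hG : G.Connected)
    (hsurj : ∀ e ∈ G.edgeSet, ∃ l, s(src l, tgt l) = e) (hne : ∀ l, src l ≠ tgt l)
    (hB : ∀ i l, B i l = if i = src l then 1 else if i = tgt l then -1 else 0)
    {u : V → ℝ} (hu : u ∈ sumZero V) (hBu : Bᵀ *ᵥ u = 0) : u = 0 := by
  have hedge : ∀ l, u (src l) = u (tgt l) := fun l => by
    simpa [incidence_transpose_mulVec hne hB, sub_eq_zero] using congrFun hBu l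
  have hconst : ∀ i j, u i = u j := hG.preconnected.eq_of_forall_adj fun i j hij => by
    obtain ⟨l, hl⟩ := hsurj s(i, j) hij
    rcases Sym2.eq_iff.1 hl with ⟨rfl, rfl⟩ | ⟨rfl, rfl⟩
    exacts [hedge l, (hedge l).symm]
  funext i
  have : Nonempty V := ⟨i⟩
  have hsum : (Fintype.card V : ℝ) * u i = 0 := by
    simpa [hconst _ i] using (mem_sumZero.1 hu)
  exact (mul_eq_zero.1 hsum).resolve_left (Nat.cast_ne_zero.2 Fintype.card_ne_zero)

end Incidence

theorem dotProduct_mul_transpose_mulVec {V E : Type*} [Fintype V] [Fintype E] (B : Matrix V E ℝ)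
    (u w : V → ℝ) : u ⬝ᵥ (B * Bᵀ) *ᵥ w = (Bᵀ *ᵥ u) ⬝ᵥ (Bᵀ *ᵥ w) := by
  rw [← mulVec_mulVec, dotProduct_mulVec, ← vecMul_transpose Bᵀ u, transpose_transpose]

theorem exists_pos_mul_dotProduct_self_le_incidence {V E : Type*} [Fintype V] [Fintype E]
    [DecidableEq V] {src tgt : E → V} {B : Matrix V E ℝ} {G : SimpleGraph V} (hG : G.Connected)
    (hsurj : ∀ e ∈ G.edgeSet, ∃ l, s(src l, tgt l) = e) (hne : ∀ l, src l ≠ tgt l)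
    (hB : ∀ i l, B i l = if i = src l then 1 else if i = tgt l then -1 else 0) :
    ∃ lam > 0, ∀ u ∈ sumZero V, lam * (u ⬝ᵥ u) ≤ u ⬝ᵥ (B * Bᵀ) *ᵥ u := by
  simp_rw [dotProduct_mul_transpose_mulVec]
  exact exists_pos_mul_dotProduct_self_le Bᵀ (sumZero V) fun u hu hBu =>
    eq_zero_of_incidence_transpose_mulVec_eq_zero hG hsurj hne hB hu hBu

section Calculus

variable {ι κ : Type*} [Fintype ι] {u w : ℝ → ι → ℝ} {u' w' : ι → ℝ} {t : ℝ}

theorem HasDerivAt.dotProduct (hu : HasDerivAt u u' t) (hw : HasDerivAt w w' t) :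
    HasDerivAt (fun s => u s ⬝ᵥ w s) (u' ⬝ᵥ w t + u t ⬝ᵥ w') t := by
  simpa [_root_.dotProduct, Finset.sum_add_distrib] using
    HasDerivAt.fun_sum (u := Finset.univ) fun i _ =>
      (hasDerivAt_pi.1 hu i).mul (hasDerivAt_pi.1 hw i)

theorem HasDerivAt.mulVec (M : Matrix κ ι ℝ) (hu : HasDerivAt u u' t) :
    HasDerivAt (fun s => M *ᵥ u s) (M *ᵥ u') t := by
  refine hasDerivAt_pi.2 fun i => ?_
  simpa [Matrix.mulVec, _root_.dotProduct] using
    HasDerivAt.fun_sum (u := Finset.univ) fun j _ => (hasDerivAt_pi.1 hu j).const_mul (M i j)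

end Calculus

theorem le_mul_exp_of_hasDerivAt_le {W W' : ℝ → ℝ} {K : ℝ}
    (hW : ∀ t, 0 ≤ t → HasDerivAt W (W' t) t) (hle : ∀ t, 0 ≤ t → W' t ≤ K * W t)
    {t : ℝ} (ht : 0 ≤ t) : W t ≤ W 0 * Real.exp (K * t) := by
  have := le_gronwallBound_of_liminf_deriv_right_le (f' := W') (δ := W 0) (ε := 0)
    (fun s hs => (hW s hs.1).continuousAt.continuousWithinAt)
    (fun s hs _ hr => (hW s hs.1).hasDerivWithinAt.liminf_right_slope_le hr) le_rfl
    (fun s hs => by simpa using hle s hs.1) t ⟨ht, le_rfl⟩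
  rwa [gronwallBound_ε0, sub_zero] at this

theorem mem_sumZero_of_hasDerivAt {ι : Type*} [Fintype ι] {f f' : ℝ → ι → ℝ}
    (hf : ∀ t, 0 ≤ t → HasDerivAt f (f' t) t) (hf' : ∀ t, 0 ≤ t → f' t ∈ sumZero ι)
    (h0 : f 0 ∈ sumZero ι) {t : ℝ} (ht : 0 ≤ t) : f t ∈ sumZero ι := by
  have hsum : ∀ s, 0 ≤ s → HasDerivAt (fun r => ∑ i, f r i) 0 s := fun s hs => by
    simpa [mem_sumZero.1 (hf' s hs)] using
      HasDerivAt.fun_sum (u := Finset.univ) fun i _ => hasDerivAt_pi.1 (hf s hs) i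
  rw [mem_sumZero, ← mem_sumZero.1 h0]
  exact constant_of_has_deriv_right_zero
    (fun s hs => (hsum s hs.1).continuousAt.continuousWithinAt)
    (fun s hs => (hsum s hs.1).hasDerivWithinAt) t ⟨ht, le_rfl⟩

section DampedSystem

variable {ι : Type*} [Fintype ι]

theorem Matrix.IsSymm.dotProduct_mulVec_comm {L : Matrix ι ι ℝ} (hL : L.IsSymm) (u w : ι → ℝ) :
    u ⬝ᵥ L *ᵥ w = w ⬝ᵥ L *ᵥ u := by
  rw [dotProduct_mulVec, dotProduct_comm, ← vecMul_transpose, hL.eq]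

theorem two_mul_abs_dotProduct_le (u w : ι → ℝ) : 2 * |u ⬝ᵥ w| ≤ u ⬝ᵥ u + w ⬝ᵥ w := by
  have hadd : 0 ≤ (u + w) ⬝ᵥ (u + w) := by simpa using dotProduct_self_star_nonneg (u + w)
  have hsub : 0 ≤ (u - w) ⬝ᵥ (u - w) := by simpa using dotProduct_self_star_nonneg (u - w)
  simp only [add_dotProduct, dotProduct_add, sub_dotProduct, dotProduct_sub,
    dotProduct_comm w u] at hadd hsub
  rw [abs_eq_max_neg, mul_max_of_nonneg _ _ zero_le_two, max_le_iff]
  constructor <;> linarith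

/-- The weight `(b + ε a) / 2` on `yᵀ L y` makes the cross terms `yᵀ L v` cancel in the
derivative along `y' = v`, `v' = -a L v - b L y`. -/
noncomputable def dampedEnergy (L : Matrix ι ι ℝ) (a b ε : ℝ) (y v : ι → ℝ) : ℝ :=
  v ⬝ᵥ v / 2 + (b + ε * a) / 2 * (y ⬝ᵥ L *ᵥ y) + ε * (y ⬝ᵥ v)

theorem dampedEnergy_bounds {L : Matrix ι ι ℝ} {a b lam ε : ℝ} (ha : 0 < a) (hb : 0 < b)
    (hlam : 0 < lam) (hε : 0 < ε) (hε_half : ε ≤ 1 / 2) (hε_ab : ε * a ≤ b)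
    (hε_a : ε ≤ lam * a / 2) (hε_b : ε ≤ lam * b / 2) {y v : ι → ℝ}
    (hy : lam * (y ⬝ᵥ y) ≤ y ⬝ᵥ L *ᵥ y) (hv : lam * (v ⬝ᵥ v) ≤ v ⬝ᵥ L *ᵥ v) :
    b * lam / 4 * (y ⬝ᵥ y) ≤ dampedEnergy L a b ε y v ∧
      -a * (v ⬝ᵥ L *ᵥ v) + ε * (v ⬝ᵥ v) - ε * b * (y ⬝ᵥ L *ᵥ y) ≤
        -(ε / 2) * dampedEnergy L a b ε y v := by
  have hX : 0 ≤ v ⬝ᵥ v := by simpa using dotProduct_self_star_nonneg v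
  have hY : 0 ≤ y ⬝ᵥ y := by simpa using dotProduct_self_star_nonneg y
  have hQ : 0 ≤ y ⬝ᵥ L *ᵥ y := (mul_nonneg hlam.le hY).trans hy
  obtain ⟨hR₁, hR₂⟩ : -((v ⬝ᵥ v + y ⬝ᵥ y) / 2) ≤ y ⬝ᵥ v ∧ y ⬝ᵥ v ≤ (v ⬝ᵥ v + y ⬝ᵥ y) / 2 := by
    rw [← abs_le]; linarith [two_mul_abs_dotProduct_le y v]
  have hupper : dampedEnergy L a b ε y v ≤ v ⬝ᵥ v + 2 * b * (y ⬝ᵥ L *ᵥ y) := by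
    unfold dampedEnergy
    linarith [mul_le_mul_of_nonneg_left hR₂ hε.le, mul_nonneg (sub_nonneg.2 hε_ab) hQ,
      mul_nonneg (sub_nonneg.2 hε_b) hY, mul_nonneg hb.le (sub_nonneg.2 hy),
      mul_nonneg (sub_nonneg.2 hε_half) hX, mul_nonneg hb.le hQ]
  constructor
  · unfold dampedEnergy
    linarith [mul_le_mul_of_nonneg_left hR₁ hε.le, mul_nonneg (sub_nonneg.2 hε_half) hX,
      mul_nonneg (mul_nonneg hε.le ha.le) hQ, mul_nonneg (sub_nonneg.2 hε_b) hY,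
      mul_nonneg hb.le (sub_nonneg.2 hy)]
  · linarith [mul_nonneg ha.le (sub_nonneg.2 hv), mul_nonneg (sub_nonneg.2 hε_a) hX,
      mul_le_mul_of_nonneg_left hupper (half_pos hε).le, mul_nonneg hε.le hX]

variable {L : Matrix ι ι ℝ} {a b : ℝ} {y v : ℝ → ι → ℝ}

theorem hasDerivAt_dampedEnergy (hL : L.IsSymm) (ε : ℝ) {t : ℝ} (hy : HasDerivAt y (v t) t)
    (hv : HasDerivAt v (-(a • L *ᵥ v t) - b • L *ᵥ y t) t) :
    HasDerivAt (fun s => dampedEnergy L a b ε (y s) (v s))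
      (-a * (v t ⬝ᵥ L *ᵥ v t) + ε * (v t ⬝ᵥ v t) - ε * b * (y t ⬝ᵥ L *ᵥ y t)) t := by
  have h := (((hv.dotProduct hv).div_const 2).add
    ((hy.dotProduct (hy.mulVec L)).const_mul ((b + ε * a) / 2))).add
    ((hy.dotProduct hv).const_mul ε)
  refine h.congr_deriv ?_
  simp only [sub_dotProduct, neg_dotProduct, smul_dotProduct, dotProduct_sub, dotProduct_neg,
    dotProduct_smul, smul_eq_mul, dotProduct_comm (L *ᵥ _) (v t),
    hL.dotProduct_mulVec_comm (v t) (y t)]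
  ring

theorem tendsto_atTop_zero_of_damped (hL : L.IsSymm) {S : Submodule ℝ (ι → ℝ)} {lam : ℝ}
    (hlam : 0 < lam) (hgap : ∀ u ∈ S, lam * (u ⬝ᵥ u) ≤ u ⬝ᵥ L *ᵥ u) (ha : 0 < a) (hb : 0 < b)
    (hy : ∀ t, 0 ≤ t → HasDerivAt y (v t) t)
    (hv : ∀ t, 0 ≤ t → HasDerivAt v (-(a • L *ᵥ v t) - b • L *ᵥ y t) t)
    (hyS : ∀ t, 0 ≤ t → y t ∈ S) (hvS : ∀ t, 0 ≤ t → v t ∈ S) :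
    Tendsto y atTop (𝓝 0) := by
  obtain ⟨ε, hε, hε_le⟩ : ∃ ε > 0,
      ε ≤ min (min (1 / 2) (b / a)) (min (lam * a / 2) (lam * b / 2)) :=
    ⟨_, by positivity, le_rfl⟩
  obtain ⟨⟨hε_half, hε_ba⟩, hε_a, hε_b⟩ := by simpa only [le_min_iff] using hε_le
  set W := fun t => dampedEnergy L a b ε (y t) (v t)
  have hbounds : ∀ t : ℝ, 0 ≤ t → _ := fun t ht =>
    dampedEnergy_bounds ha hb hlam hε hε_half ((le_div_iff₀ ha).1 hε_ba) hε_a hε_b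
      (hgap _ (hyS t ht)) (hgap _ (hvS t ht))
  have hdecay : ∀ t, 0 ≤ t → W t ≤ W 0 * Real.exp (-(ε / 2) * t) := fun t =>
    le_mul_exp_of_hasDerivAt_le
      (fun s hs => hasDerivAt_dampedEnergy hL ε (hy s hs) (hv s hs)) (fun s hs => (hbounds s hs).2)
  have hexp : Tendsto (fun t => 4 / (b * lam) * W 0 * Real.exp (-(ε / 2) * t)) atTop (𝓝 0) := by
    simpa using (Real.tendsto_exp_atBot.comp (tendsto_id.const_mul_atTop_of_neg
      (by linarith : -(ε / 2) < 0))).const_mul (4 / (b * lam) * W 0)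
  have hsq : Tendsto (fun t => ‖y t‖ ^ 2) atTop (𝓝 0) := by
    refine squeeze_zero' (Eventually.of_forall fun t => sq_nonneg _) ?_ hexp
    filter_upwards [eventually_ge_atTop 0] with t ht
    calc ‖y t‖ ^ 2 ≤ y t ⬝ᵥ y t := sq_norm_le_dotProduct_self _
      _ ≤ 4 / (b * lam) * W t := by
        rw [div_mul_eq_mul_div, le_div_iff₀ (by positivity)]; linarith [(hbounds t ht).1]
      _ ≤ _ := by rw [mul_assoc]; exact mul_le_mul_of_nonneg_left (hdecay t ht) (by positivity)
  rw [tendsto_zero_iff_norm_tendsto_zero]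
  simpa using hsq.sqrt

end DampedSystem

theorem tendsto_phase_sub_mul_atTop {ι : Type*} [Fintype ι] {L : Matrix ι ι ℝ} (hL : L.IsSymm)
    (hL1 : L *ᵥ 1 = 0) {lam a b c : ℝ} (hlam : 0 < lam)
    (hgap : ∀ u ∈ sumZero ι, lam * (u ⬝ᵥ u) ≤ u ⬝ᵥ L *ᵥ u) (ha : 0 < a) (hb : 0 < b)
    {ωu : ι → ℝ} (hc : Fintype.card ι * c = ∑ i, ωu i) {x₁ x₂ : ℝ → ι → ℝ}
    (hx₁0 : x₁ 0 = 0) (hx₂0 : x₂ 0 = 0)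
    (hx₁ : ∀ t, 0 ≤ t → HasDerivAt x₁ (-(a • L *ᵥ x₁ t) + b • x₂ t + ωu) t)
    (hx₂ : ∀ t, 0 ≤ t → HasDerivAt x₂ (-(L *ᵥ x₁ t)) t) :
    Tendsto (fun t i => x₁ t i - c * t) atTop (𝓝 0) := by
  have hLconst : ∀ s : ℝ, L *ᵥ (fun _ => s) = 0 := fun s => by
    rw [show (fun _ : ι => s) = s • 1 by ext; simp, mulVec_smul, hL1, smul_zero]
  have hLsum : ∀ z, L *ᵥ z ∈ sumZero ι := fun z => by
    rw [mem_sumZero, ← one_dotProduct, hL.dotProduct_mulVec_comm, hL1, dotProduct_zero]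
  set y : ℝ → ι → ℝ := fun t i => x₁ t i - c * t
  set v : ℝ → ι → ℝ := fun t => -(a • L *ᵥ x₁ t) + b • x₂ t + ωu - fun _ => c
  have hLy : ∀ t, L *ᵥ y t = L *ᵥ x₁ t := fun t => by
    change L *ᵥ (x₁ t - fun _ => c * t) = _
    rw [mulVec_sub, hLconst, sub_zero]
  have hy : ∀ t, 0 ≤ t → HasDerivAt y (v t) t := fun t ht =>
    (hx₁ t ht).sub <| hasDerivAt_pi.2 fun _ =>
      ((hasDerivAt_id t).const_mul c).congr_deriv (mul_one c)
  have hv : ∀ t, 0 ≤ t → HasDerivAt v (-(a • L *ᵥ v t) - b • L *ᵥ y t) t := fun t ht => by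
    have hLv : L *ᵥ v t = L *ᵥ (-(a • L *ᵥ x₁ t) + b • x₂ t + ωu) := by
      simp only [v, mulVec_sub, hLconst, sub_zero]
    refine (((((hx₁ t ht).mulVec L).const_smul a).neg.add
      ((hx₂ t ht).const_smul b)).add_const ωu |>.sub_const fun _ => c).congr_deriv ?_
    rw [hLv, hLy, smul_neg, sub_eq_add_neg]
  have hx₂S : ∀ t, 0 ≤ t → x₂ t ∈ sumZero ι := fun t =>
    mem_sumZero_of_hasDerivAt hx₂ (fun s _ => neg_mem (hLsum _)) (by simp [hx₂0])
  have hvS : ∀ t, 0 ≤ t → v t ∈ sumZero ι := fun t ht => by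
    rw [show v t = -(a • L *ᵥ x₁ t) + b • x₂ t + (ωu - fun _ => c) from add_sub_assoc _ _ _]
    refine add_mem (add_mem (neg_mem (Submodule.smul_mem _ _ (hLsum _)))
      (Submodule.smul_mem _ _ (hx₂S t ht))) ?_
    simp [Finset.sum_sub_distrib, hc]
  have hyS : ∀ t, 0 ≤ t → y t ∈ sumZero ι := fun t =>
    mem_sumZero_of_hasDerivAt hy hvS (by simp [y, hx₁0])
  exact tendsto_atTop_zero_of_damped hL hlam hgap ha hb hy hv hyS hvS

theorem stmt13_general
    (n m : ℕ)
    (G : SimpleGraph (Fin n)) (hG : G.Connected)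
    (src tgt : Fin m → Fin n)
    (hadj : ∀ l, G.Adj (src l) (tgt l))
    (hsurj : ∀ e ∈ G.edgeSet, ∃ l : Fin m, s(src l, tgt l) = e)
    (B : Matrix (Fin n) (Fin m) ℝ)
    (hB : ∀ i l, B i l = if i = src l then (1 : ℝ) else if i = tgt l then -1 else 0)
    (L : Matrix (Fin n) (Fin n) ℝ) (hL : L = B * Bᵀ)
    (a b : ℝ) (ha : 0 < a) (hb : 0 < b)
    (ωu : Fin n → ℝ)
    (A : Matrix (Fin n ⊕ Fin n) (Fin n ⊕ Fin n) ℝ)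
    (hA : A = Matrix.fromBlocks (-(a • L)) (b • (1 : Matrix (Fin n) (Fin n) ℝ)) (-L) 0)
    (B2 : Matrix (Fin n ⊕ Fin n) (Fin n) ℝ)
    (hB2 : B2 = Matrix.fromRows (1 : Matrix (Fin n) (Fin n) ℝ) 0)
    (x : ℝ → (Fin n ⊕ Fin n) → ℝ)
    (hx0 : x 0 = 0)
    (hx : ∀ t : ℝ, 0 ≤ t → HasDerivAt x (A *ᵥ x t + B2 *ᵥ ωu) t)
    (ωavg : ℝ) (hωavg : ωavg = (1 / (n : ℝ)) * ∑ i, ωu i)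
    :
    Tendsto (fun t : ℝ => fun i : Fin n => x t (Sum.inl i) - ωavg * t) atTop
      (𝓝 0) := by
  subst hL hA hB2
  have hne : ∀ l, src l ≠ tgt l := fun l => (hadj l).ne
  obtain ⟨lam, hlam, hgap⟩ := exists_pos_mul_dotProduct_self_le_incidence hG hsurj hne hB
  have hL1 : (B * Bᵀ) *ᵥ 1 = 0 := by
    rw [← mulVec_mulVec, incidence_transpose_mulVec hne hB]
    simp only [Pi.one_apply, sub_self]
    exact mulVec_zero B
  have hc : Fintype.card (Fin n) * ωavg = ∑ i, ωu i := by
    have : (n : ℝ) ≠ 0 := Nat.cast_ne_zero.2 (Fin.pos_iff_nonempty.2 hG.nonempty).ne'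
    rw [Fintype.card_fin, hωavg]
    field_simp
  have hsymm : (B * Bᵀ).IsSymm := by simp [IsSymm, transpose_mul]
  have hcomp : ∀ t, 0 ≤ t → ∀ k, HasDerivAt (fun s => x s k) _ t := fun t ht =>
    hasDerivAt_pi.1 (hx t ht)
  refine tendsto_phase_sub_mul_atTop hsymm hL1 hlam hgap ha hb hc
    (x₂ := fun t i => x t (Sum.inr i)) (by ext; simp [hx0]) (by ext; simp [hx0])
    (fun t ht => hasDerivAt_pi.2 fun i => (hcomp t ht (Sum.inl i)).congr_deriv ?_)
    (fun t ht => hasDerivAt_pi.2 fun i => (hcomp t ht (Sum.inr i)).congr_deriv ?_)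
  · simp [fromBlocks_mulVec, fromRows_mulVec, neg_mulVec, smul_mulVec, Function.comp_def]
  · simp [fromBlocks_mulVec, fromRows_mulVec, neg_mulVec, Function.comp_def]

theorem stmt13
    (n m : ℕ) (hn : 2 ≤ n)
    (G : SimpleGraph (Fin n)) (hG : G.Connected)
    (src tgt : Fin m → Fin n)
    (hadj : ∀ l, G.Adj (src l) (tgt l))
    (hinj : ∀ l l' : Fin m, s(src l, tgt l) = s(src l', tgt l') → l = l')
    (hsurj : ∀ e ∈ G.edgeSet, ∃ l : Fin m, s(src l, tgt l) = e)
    (B : Matrix (Fin n) (Fin m) ℝ)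
    (hB : ∀ i l, B i l = if i = src l then (1 : ℝ) else if i = tgt l then -1 else 0)
    (L : Matrix (Fin n) (Fin n) ℝ) (hL : L = B * Bᵀ)
    (a b : ℝ) (ha : 0 < a) (hb : 0 < b)
    (ωu : Fin n → ℝ)
    (A : Matrix (Fin n ⊕ Fin n) (Fin n ⊕ Fin n) ℝ)
    (hA : A = Matrix.fromBlocks (-(a • L)) (b • (1 : Matrix (Fin n) (Fin n) ℝ)) (-L) 0)
    (B2 : Matrix (Fin n ⊕ Fin n) (Fin n) ℝ)
    (hB2 : B2 = Matrix.fromRows (1 : Matrix (Fin n) (Fin n) ℝ) 0)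
    (C1 : Matrix (Fin n) (Fin n ⊕ Fin n) ℝ)
    (hC1 : C1 = Matrix.fromCols (-(a • L)) (b • (1 : Matrix (Fin n) (Fin n) ℝ)))
    (C2 : Matrix (Fin m) (Fin n ⊕ Fin n) ℝ)
    (hC2 : C2 = Matrix.fromCols (-Bᵀ) 0)
    (x : ℝ → (Fin n ⊕ Fin n) → ℝ)
    (hx0 : x 0 = 0)
    (hx : ∀ t : ℝ, 0 ≤ t → HasDerivAt x (A *ᵥ x t + B2 *ᵥ ωu) t)
    (ω : ℝ → Fin n → ℝ) (hω : ∀ t, ω t = C1 *ᵥ x t + ωu)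
    (δ : ℝ → Fin m → ℝ) (hδ : ∀ t, δ t = C2 *ᵥ x t)
    (ωavg : ℝ) (hωavg : ωavg = (1 / (n : ℝ)) * ∑ i, ωu i)
    (ωss : Fin n → ℝ) (hωss : ωss = fun _ => ωavg)
    :
    Tendsto (fun t : ℝ => fun i : Fin n => x t (Sum.inl i) - ωavg * t) atTop
      (𝓝 0) :=
  stmt13_general n m G hG src tgt hadj hsurj B hB L hL a b ha hb ωu A hA B2 hB2 x hx0 hx ωavg hωavg
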